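/- In B_6 with Artin generators σ_1, ..., σ_5, the width-2 block crossings A = σ_2 σ_1 σ_3 σ_2 (blocks at positions 1-2 and 3-4) and B = σ_4 σ_3 σ_5 σ_4 (blocks at positions 3-4 and 5-6) satisfy A B A = B A B. -/

import Mathlib

/-- The braid relations on generators `Fin n` (generator `i` stands for `σ_{i+1}`). -/
def braidRels (n : ℕ) : Set (FreeGroup (Fin n)) :=
  { r | (∃ i j : Fin n, (i : ℕ) + 2 ≤ (j : ℕ) ∧
          r = FreeGroup.of i * FreeGroup.of j * (FreeGroup.of i)⁻¹ * (FreeGroup.of j)⁻¹) ∨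
        (∃ i j : Fin n, (i : ℕ) + 1 = (j : ℕ) ∧
          r = FreeGroup.of i * FreeGroup.of j * FreeGroup.of i *
              (FreeGroup.of j * FreeGroup.of i * FreeGroup.of j)⁻¹) }

/-- The braid group `B_n`, presented by `n - 1` Artin generators. -/
def BraidGroup (n : ℕ) : Type := PresentedGroup (braidRels (n - 1))

instance (n : ℕ) : Group (BraidGroup n) :=
  inferInstanceAs (Group (PresentedGroup (braidRels (n - 1))))

/-- The Artin generator `σ_{i+1}` of `B_n` (0-indexed `i`). -/
def σ {n : ℕ} (i : Fin (n - 1)) : BraidGroup n := PresentedGroup.of i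

/-- The Artin generator `σ_m` of `B_n`, with the 1-based index `m` as in the paper
(junk value `1` when `m` is out of range). -/
def gen (n m : ℕ) : BraidGroup n :=
  if h : 1 ≤ m ∧ m ≤ n - 1 then σ ⟨m - 1, by omega⟩ else 1

/-- The element of `B_n` given by a braid word, written as a list of 1-based
generator indices. -/
def wordProd (n : ℕ) (w : List ℕ) : BraidGroup n := (w.map (gen n)).prod

/-- The (1-based) index word of the shifted block crossing
`β^{(s)}_{a,b} = ∏_{j=a}^{1} (σ_{s+j+b-1} σ_{s+j+b-2} ⋯ σ_{s+j})`. -/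
def betaWord (s a b : ℕ) : List ℕ :=
  (List.range a).reverse.flatMap (fun j' => (List.range b).reverse.map (fun t => s + j' + 1 + t))

/-- The block crossing `β^{(s)}_{a,b} ∈ B_n` of the `a`-block starting at position `s+1`
over the following `b`-block. -/
def blockCross (n s a b : ℕ) : BraidGroup n := wordProd n (betaWord s a b)

private lemma sigma_comm {n : ℕ} (i j : Fin (n - 1)) (h : (i : ℕ) + 2 ≤ (j : ℕ)) :
    σ (n := n) i * σ j = σ j * σ i := by
  have h1 : PresentedGroup.mk (braidRels (n - 1))
      (FreeGroup.of i * FreeGroup.of j * (FreeGroup.of i)⁻¹ * (FreeGroup.of j)⁻¹) = 1 :=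
    (QuotientGroup.eq_one_iff _).mpr
      (Subgroup.subset_normalClosure (Or.inl ⟨i, j, h, rfl⟩))
  have h2 : σ (n := n) i * σ j * (σ i)⁻¹ * (σ j)⁻¹ = 1 := by
    simp only [map_mul, map_inv] at h1; exact h1
  rw [mul_inv_eq_one, mul_inv_eq_iff_eq_mul] at h2
  exact h2

private lemma sigma_braid {n : ℕ} (i j : Fin (n - 1)) (h : (i : ℕ) + 1 = (j : ℕ)) :
    σ (n := n) i * σ j * σ i = σ j * σ i * σ j := by
  have h1 : PresentedGroup.mk (braidRels (n - 1))
      (FreeGroup.of i * FreeGroup.of j * FreeGroup.of i *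
        (FreeGroup.of j * FreeGroup.of i * FreeGroup.of j)⁻¹) = 1 :=
    (QuotientGroup.eq_one_iff _).mpr
      (Subgroup.subset_normalClosure (Or.inr ⟨i, j, h, rfl⟩))
  have h2 : σ (n := n) i * σ j * σ i * (σ j * σ i * σ j)⁻¹ = 1 := by
    simp only [map_mul, map_inv] at h1; exact h1
  rwa [mul_inv_eq_one] at h2

private lemma comm_gen (a b : ℕ) (ha : 1 ≤ a) (hab : a + 2 ≤ b) (hb : b ≤ 5) :
    gen 6 a * gen 6 b = gen 6 b * gen 6 a := by
  have ha' : 1 ≤ a ∧ a ≤ 6 - 1 := ⟨ha, by omega⟩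
  have hb' : 1 ≤ b ∧ b ≤ 6 - 1 := ⟨by omega, by omega⟩
  rw [gen, gen, dif_pos ha', dif_pos hb']
  exact sigma_comm _ _ (by simp only [Fin.val_mk]; omega)

private lemma braid_gen (a : ℕ) (ha : 1 ≤ a) (ha5 : a + 1 ≤ 5) :
    gen 6 a * gen 6 (a + 1) * gen 6 a = gen 6 (a + 1) * gen 6 a * gen 6 (a + 1) := by
  have ha' : 1 ≤ a ∧ a ≤ 6 - 1 := ⟨ha, by omega⟩
  have hb' : 1 ≤ a + 1 ∧ a + 1 ≤ 6 - 1 := ⟨by omega, by omega⟩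
  rw [gen, gen, dif_pos ha', dif_pos hb']
  exact sigma_braid _ _ (by simp only [Fin.val_mk]; omega)

private lemma wp_append (x y : List ℕ) : wordProd 6 (x ++ y) = wordProd 6 x * wordProd 6 y := by
  simp [wordProd]

private lemma step (p l r s : List ℕ) (h : wordProd 6 l = wordProd 6 r) :
    wordProd 6 (p ++ l ++ s) = wordProd 6 (p ++ r ++ s) := by
  simp only [wp_append, h]

private lemma comm_w (a b : ℕ) (ha : 1 ≤ a) (hab : a + 2 ≤ b) (hb : b ≤ 5) :
    wordProd 6 [a, b] = wordProd 6 [b, a] := by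
  simp only [wordProd, List.map_cons, List.map_nil, List.prod_cons, List.prod_nil, mul_one]
  exact comm_gen a b ha hab hb

private lemma comm_w' (a b : ℕ) (hb : 1 ≤ b) (hba : b + 2 ≤ a) (ha : a ≤ 5) :
    wordProd 6 [a, b] = wordProd 6 [b, a] :=
  (comm_w b a hb hba ha).symm

private lemma braid_w (a : ℕ) (ha : 1 ≤ a) (ha5 : a + 1 ≤ 5) :
    wordProd 6 [a, a + 1, a] = wordProd 6 [a + 1, a, a + 1] := by
  simp only [wordProd, List.map_cons, List.map_nil, List.prod_cons, List.prod_nil, mul_one,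
    ← mul_assoc]
  exact braid_gen a ha ha5

private lemma braid_w' (b : ℕ) (hb : 1 ≤ b) (hb5 : b + 1 ≤ 5) :
    wordProd 6 [b + 1, b, b + 1] = wordProd 6 [b, b + 1, b] :=
  (braid_w b hb hb5).symm

/-- In `B_6`, the width-2 block crossings `A = σ_2 σ_1 σ_3 σ_2` (blocks at positions 1-2 and
3-4) and `B = σ_4 σ_3 σ_5 σ_4` (blocks at positions 3-4 and 5-6) satisfy the braid relation
`A B A = B A B` (the Yang–Baxter equation on 2-ribbons). -/
theorem ribbon_yang_baxter_B6 :
    let A : BraidGroup 6 := gen 6 2 * gen 6 1 * gen 6 3 * gen 6 2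
    let B : BraidGroup 6 := gen 6 4 * gen 6 3 * gen 6 5 * gen 6 4
    A * B * A = B * A * B := by
  show (gen 6 2 * gen 6 1 * gen 6 3 * gen 6 2) * (gen 6 4 * gen 6 3 * gen 6 5 * gen 6 4) *
      (gen 6 2 * gen 6 1 * gen 6 3 * gen 6 2) =
    (gen 6 4 * gen 6 3 * gen 6 5 * gen 6 4) * (gen 6 2 * gen 6 1 * gen 6 3 * gen 6 2) *
      (gen 6 4 * gen 6 3 * gen 6 5 * gen 6 4)
  calc (gen 6 2 * gen 6 1 * gen 6 3 * gen 6 2) * (gen 6 4 * gen 6 3 * gen 6 5 * gen 6 4) *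
      (gen 6 2 * gen 6 1 * gen 6 3 * gen 6 2)
    _ = wordProd 6 [2, 1, 3, 2, 4, 3, 5, 4, 2, 1, 3, 2] := by simp [wordProd, mul_assoc]
    _ = wordProd 6 [2, 1, 3, 4, 2, 3, 5, 4, 2, 1, 3, 2] := step [2, 1, 3] [2, 4] [4, 2] [3, 5, 4, 2, 1, 3, 2] (comm_w 2 4 (by norm_num) (by norm_num) (by norm_num))
    _ = wordProd 6 [2, 1, 3, 4, 2, 3, 5, 2, 4, 1, 3, 2] := step [2, 1, 3, 4, 2, 3, 5] [4, 2] [2, 4] [1, 3, 2] (comm_w' 4 2 (by norm_num) (by norm_num) (by norm_num))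
    _ = wordProd 6 [2, 1, 3, 4, 2, 3, 2, 5, 4, 1, 3, 2] := step [2, 1, 3, 4, 2, 3] [5, 2] [2, 5] [4, 1, 3, 2] (comm_w' 5 2 (by norm_num) (by norm_num) (by norm_num))
    _ = wordProd 6 [2, 1, 3, 4, 2, 3, 2, 5, 1, 4, 3, 2] := step [2, 1, 3, 4, 2, 3, 2, 5] [4, 1] [1, 4] [3, 2] (comm_w' 4 1 (by norm_num) (by norm_num) (by norm_num))
    _ = wordProd 6 [2, 1, 3, 4, 2, 3, 2, 1, 5, 4, 3, 2] := step [2, 1, 3, 4, 2, 3, 2] [5, 1] [1, 5] [4, 3, 2] (comm_w' 5 1 (by norm_num) (by norm_num) (by norm_num))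
    _ = wordProd 6 [2, 1, 3, 4, 3, 2, 3, 1, 5, 4, 3, 2] := step [2, 1, 3, 4] [2, 3, 2] [3, 2, 3] [1, 5, 4, 3, 2] (braid_w 2 (by norm_num) (by norm_num))
    _ = wordProd 6 [2, 1, 3, 4, 3, 2, 1, 3, 5, 4, 3, 2] := step [2, 1, 3, 4, 3, 2] [3, 1] [1, 3] [5, 4, 3, 2] (comm_w' 3 1 (by norm_num) (by norm_num) (by norm_num))
    _ = wordProd 6 [2, 1, 3, 4, 3, 2, 1, 5, 3, 4, 3, 2] := step [2, 1, 3, 4, 3, 2, 1] [3, 5] [5, 3] [4, 3, 2] (comm_w 3 5 (by norm_num) (by norm_num) (by norm_num))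
    _ = wordProd 6 [2, 1, 4, 3, 4, 2, 1, 5, 3, 4, 3, 2] := step [2, 1] [3, 4, 3] [4, 3, 4] [2, 1, 5, 3, 4, 3, 2] (braid_w 3 (by norm_num) (by norm_num))
    _ = wordProd 6 [2, 4, 1, 3, 4, 2, 1, 5, 3, 4, 3, 2] := step [2] [1, 4] [4, 1] [3, 4, 2, 1, 5, 3, 4, 3, 2] (comm_w 1 4 (by norm_num) (by norm_num) (by norm_num))
    _ = wordProd 6 [4, 2, 1, 3, 4, 2, 1, 5, 3, 4, 3, 2] := step [] [2, 4] [4, 2] [1, 3, 4, 2, 1, 5, 3, 4, 3, 2] (comm_w 2 4 (by norm_num) (by norm_num) (by norm_num))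
    _ = wordProd 6 [4, 2, 3, 1, 4, 2, 1, 5, 3, 4, 3, 2] := step [4, 2] [1, 3] [3, 1] [4, 2, 1, 5, 3, 4, 3, 2] (comm_w 1 3 (by norm_num) (by norm_num) (by norm_num))
    _ = wordProd 6 [4, 2, 3, 1, 2, 4, 1, 5, 3, 4, 3, 2] := step [4, 2, 3, 1] [4, 2] [2, 4] [1, 5, 3, 4, 3, 2] (comm_w' 4 2 (by norm_num) (by norm_num) (by norm_num))
    _ = wordProd 6 [4, 2, 3, 1, 2, 1, 4, 5, 3, 4, 3, 2] := step [4, 2, 3, 1, 2] [4, 1] [1, 4] [5, 3, 4, 3, 2] (comm_w' 4 1 (by norm_num) (by norm_num) (by norm_num))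
    _ = wordProd 6 [4, 2, 3, 2, 1, 2, 4, 5, 3, 4, 3, 2] := step [4, 2, 3] [1, 2, 1] [2, 1, 2] [4, 5, 3, 4, 3, 2] (braid_w 1 (by norm_num) (by norm_num))
    _ = wordProd 6 [4, 3, 2, 3, 1, 2, 4, 5, 3, 4, 3, 2] := step [4] [2, 3, 2] [3, 2, 3] [1, 2, 4, 5, 3, 4, 3, 2] (braid_w 2 (by norm_num) (by norm_num))
    _ = wordProd 6 [4, 3, 2, 1, 3, 2, 4, 5, 3, 4, 3, 2] := step [4, 3, 2] [3, 1] [1, 3] [2, 4, 5, 3, 4, 3, 2] (comm_w' 3 1 (by norm_num) (by norm_num) (by norm_num))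
    _ = wordProd 6 [4, 3, 2, 1, 3, 2, 4, 5, 4, 3, 4, 2] := step [4, 3, 2, 1, 3, 2, 4, 5] [3, 4, 3] [4, 3, 4] [2] (braid_w 3 (by norm_num) (by norm_num))
    _ = wordProd 6 [4, 3, 2, 1, 3, 2, 4, 5, 4, 3, 2, 4] := step [4, 3, 2, 1, 3, 2, 4, 5, 4, 3] [4, 2] [2, 4] [] (comm_w' 4 2 (by norm_num) (by norm_num) (by norm_num))
    _ = wordProd 6 [4, 3, 2, 1, 3, 2, 5, 4, 5, 3, 2, 4] := step [4, 3, 2, 1, 3, 2] [4, 5, 4] [5, 4, 5] [3, 2, 4] (braid_w 4 (by norm_num) (by norm_num))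
    _ = wordProd 6 [4, 3, 2, 1, 3, 5, 2, 4, 5, 3, 2, 4] := step [4, 3, 2, 1, 3] [2, 5] [5, 2] [4, 5, 3, 2, 4] (comm_w 2 5 (by norm_num) (by norm_num) (by norm_num))
    _ = wordProd 6 [4, 3, 2, 1, 5, 3, 2, 4, 5, 3, 2, 4] := step [4, 3, 2, 1] [3, 5] [5, 3] [2, 4, 5, 3, 2, 4] (comm_w 3 5 (by norm_num) (by norm_num) (by norm_num))
    _ = wordProd 6 [4, 3, 2, 5, 1, 3, 2, 4, 5, 3, 2, 4] := step [4, 3, 2] [1, 5] [5, 1] [3, 2, 4, 5, 3, 2, 4] (comm_w 1 5 (by norm_num) (by norm_num) (by norm_num))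
    _ = wordProd 6 [4, 3, 5, 2, 1, 3, 2, 4, 5, 3, 2, 4] := step [4, 3] [2, 5] [5, 2] [1, 3, 2, 4, 5, 3, 2, 4] (comm_w 2 5 (by norm_num) (by norm_num) (by norm_num))
    _ = wordProd 6 [4, 3, 5, 2, 1, 3, 4, 2, 5, 3, 2, 4] := step [4, 3, 5, 2, 1, 3] [2, 4] [4, 2] [5, 3, 2, 4] (comm_w 2 4 (by norm_num) (by norm_num) (by norm_num))
    _ = wordProd 6 [4, 3, 5, 2, 1, 3, 4, 2, 3, 5, 2, 4] := step [4, 3, 5, 2, 1, 3, 4, 2] [5, 3] [3, 5] [2, 4] (comm_w' 5 3 (by norm_num) (by norm_num) (by norm_num))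
    _ = wordProd 6 [4, 3, 5, 2, 1, 3, 4, 2, 3, 2, 5, 4] := step [4, 3, 5, 2, 1, 3, 4, 2, 3] [5, 2] [2, 5] [4] (comm_w' 5 2 (by norm_num) (by norm_num) (by norm_num))
    _ = wordProd 6 [4, 3, 5, 2, 1, 3, 4, 3, 2, 3, 5, 4] := step [4, 3, 5, 2, 1, 3, 4] [2, 3, 2] [3, 2, 3] [5, 4] (braid_w 2 (by norm_num) (by norm_num))
    _ = wordProd 6 [4, 3, 5, 2, 1, 4, 3, 4, 2, 3, 5, 4] := step [4, 3, 5, 2, 1] [3, 4, 3] [4, 3, 4] [2, 3, 5, 4] (braid_w 3 (by norm_num) (by norm_num))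
    _ = wordProd 6 [4, 3, 5, 2, 4, 1, 3, 4, 2, 3, 5, 4] := step [4, 3, 5, 2] [1, 4] [4, 1] [3, 4, 2, 3, 5, 4] (comm_w 1 4 (by norm_num) (by norm_num) (by norm_num))
    _ = wordProd 6 [4, 3, 5, 4, 2, 1, 3, 4, 2, 3, 5, 4] := step [4, 3, 5] [2, 4] [4, 2] [1, 3, 4, 2, 3, 5, 4] (comm_w 2 4 (by norm_num) (by norm_num) (by norm_num))
    _ = wordProd 6 [4, 3, 5, 4, 2, 1, 3, 2, 4, 3, 5, 4] := step [4, 3, 5, 4, 2, 1, 3] [4, 2] [2, 4] [3, 5, 4] (comm_w' 4 2 (by norm_num) (by norm_num) (by norm_num))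
    _ = (gen 6 4 * gen 6 3 * gen 6 5 * gen 6 4) * (gen 6 2 * gen 6 1 * gen 6 3 * gen 6 2) *
      (gen 6 4 * gen 6 3 * gen 6 5 * gen 6 4) := by simp [wordProd, mul_assoc]
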